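/- The radius of convergence of the Catalan generating function Σ_{n≥0} c_n x^n is 1/4. -/
import Mathlib

open Filter Topology

lemma catalan_pos' (n : ℕ) : 0 < catalan n := by
  rcases Nat.eq_zero_or_pos (catalan n) with h | h
  · have h1 := succ_mul_catalan_eq_centralBinom n
    rw [h, mul_zero] at h1
    exact absurd h1.symm n.centralBinom_pos.ne'
  · exact h

lemma catalan_ratio_real (n : ℕ) :
    ((n : ℝ) + 2) * (catalan (n + 1) : ℝ) = 2 * (2 * n + 1) * (catalan n : ℝ) := by
  have e : ((n : ℝ) + 1) * ((n + 1).centralBinom : ℝ)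
      = 2 * (2 * n + 1) * (n.centralBinom : ℝ) := by
    exact_mod_cast congrArg (Nat.cast : ℕ → ℝ) (Nat.succ_mul_centralBinom_succ n)
  have e1 : ((n : ℝ) + 1) * (catalan n : ℝ) = (n.centralBinom : ℝ) := by
    exact_mod_cast congrArg (Nat.cast : ℕ → ℝ) (succ_mul_catalan_eq_centralBinom n)
  have e2 : ((n : ℝ) + 2) * (catalan (n + 1) : ℝ) = ((n + 1).centralBinom : ℝ) := by
    have := congrArg (Nat.cast : ℕ → ℝ) (succ_mul_catalan_eq_centralBinom (n + 1))
    push_cast at this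
    linarith
  have hn1 : ((n : ℝ) + 1) ≠ 0 := by positivity
  apply mul_left_cancel₀ hn1
  linear_combination ((n : ℝ) + 1) * e2 + e - 2 * (2 * (n : ℝ) + 1) * e1

theorem catalan_gf_radius :
    (FormalMultilinearSeries.ofScalars ℝ (fun n => (catalan n : ℝ))).radius
      = ENNReal.ofReal (1 / 4) := by
  have hratio : Tendsto (fun n : ℕ => ‖((catalan (n + 1) : ℝ))‖ / ‖((catalan n : ℝ))‖)
      atTop (𝓝 ((4 : NNReal) : ℝ)) := by
    have heq : ∀ n : ℕ, ‖((catalan (n + 1) : ℝ))‖ / ‖((catalan n : ℝ))‖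
        = 4 - 6 / ((n : ℝ) + 2) := by
      intro n
      have hcr := catalan_ratio_real n
      have hn2 : (n : ℝ) + 2 ≠ 0 := by positivity
      have hcn : (catalan n : ℝ) ≠ 0 := by
        exact_mod_cast (catalan_pos' n).ne'
      rw [Real.norm_natCast, Real.norm_natCast]
      field_simp
      nlinarith [hcr]
    simp only [heq]
    have h6 : Tendsto (fun n : ℕ => 6 / ((n : ℝ) + 2)) atTop (𝓝 0) := by
      apply Tendsto.div_atTop (tendsto_const_nhds)
      exact tendsto_atTop_add_const_right _ 2 tendsto_natCast_atTop_atTop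
    have h4 : Tendsto (fun _ : ℕ => (4 : ℝ)) atTop (𝓝 4) := tendsto_const_nhds
    have := h4.sub h6
    simpa using this
  have h := FormalMultilinearSeries.ofScalars_radius_eq_inv_of_tendsto ℝ
    (fun n => (catalan n : ℝ)) (r := 4) (by norm_num) hratio
  rw [h, ENNReal.ofReal]
  congr 1
  ext
  simp
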